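/- arXiv:2507.12647 — 2 statements merged into one kernel-verified Lean document; each statement's English description precedes it below -/
import Mathlib

section
/- For any real constants c > 0 and d, the function f(n) = logit(Φ(c√n + d)), where Φ is the standard normal CDF, satisfies lim_{n→∞} f′(n) = c²/2. -/
open Real Set Filter

/-- The logit function logit(x) = log x − log(1 − x). -/
noncomputable def logit (x : ℝ) : ℝ := Real.log x - Real.log (1 - x)

/-- The standard normal cumulative distribution function Φ. -/
noncomputable def stdNormalCDF (x : ℝ) : ℝ :=
  ∫ t in Iic x, Real.exp (-t ^ 2 / 2) / Real.sqrt (2 * Real.pi)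

section Aux

open MeasureTheory

/-- The standard normal density. -/
noncomputable def phiAux (t : ℝ) : ℝ := Real.exp (-t ^ 2 / 2) / Real.sqrt (2 * Real.pi)

lemma phiAux_pos (t : ℝ) : 0 < phiAux t :=
  div_pos (exp_pos _) (Real.sqrt_pos.2 (by positivity))

lemma integrable_phiAux : Integrable phiAux := by
  have h := integrable_exp_neg_mul_sq (by norm_num : (0:ℝ) < 1/2)
  have : phiAux = fun t => Real.exp (-(1/2) * t ^ 2) / Real.sqrt (2 * Real.pi) := by
    funext t; unfold phiAux; ring_nf
  rw [this]
  exact h.div_const _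

lemma integral_phiAux : ∫ t, phiAux t = 1 := by
  have h := integral_gaussian (1/2 : ℝ)
  have h2 : ∫ t, phiAux t = (∫ t : ℝ, Real.exp (-(1/2) * t ^ 2)) / Real.sqrt (2 * Real.pi) := by
    rw [← integral_div]
    congr 1; funext t; unfold phiAux; ring_nf
  rw [h2, h]
  rw [show (π / (1/2 : ℝ)) = 2 * π by ring]
  exact div_self (by positivity)

lemma stdNormalCDF_eq (x : ℝ) : stdNormalCDF x = ∫ t in Iic x, phiAux t := rfl

lemma tail_eq (x : ℝ) : 1 - stdNormalCDF x = ∫ t in Ioi x, phiAux t := by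
  have h := intervalIntegral.integral_Iic_add_Ioi (μ := volume) (b := x)
    integrable_phiAux.integrableOn integrable_phiAux.integrableOn
  rw [stdNormalCDF_eq, ← integral_phiAux]
  linarith [h]

lemma stdNormalCDF_pos (x : ℝ) : 0 < stdNormalCDF x := by
  rw [stdNormalCDF_eq]
  rw [MeasureTheory.setIntegral_pos_iff_support_of_nonneg_ae
    (Filter.Eventually.of_forall fun t => (phiAux_pos t).le) integrable_phiAux.integrableOn]
  have : Function.support phiAux = univ := by
    ext t; simp [Function.support, (phiAux_pos t).ne']
  rw [this, univ_inter]
  simp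

lemma stdNormalCDF_lt_one (x : ℝ) : stdNormalCDF x < 1 := by
  have h : 0 < ∫ t in Ioi x, phiAux t := by
    rw [MeasureTheory.setIntegral_pos_iff_support_of_nonneg_ae
      (Filter.Eventually.of_forall fun t => (phiAux_pos t).le) integrable_phiAux.integrableOn]
    have : Function.support phiAux = univ := by
      ext t; simp [Function.support, (phiAux_pos t).ne']
    rw [this, univ_inter]
    simp
  linarith [tail_eq x]

lemma hasDerivAt_stdNormalCDF (x : ℝ) : HasDerivAt stdNormalCDF (phiAux x) x := by
  have key : ∀ y : ℝ, stdNormalCDF y = stdNormalCDF 0 + ∫ t in (0:ℝ)..y, phiAux t := by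
    intro y
    rw [stdNormalCDF_eq, stdNormalCDF_eq,
      ← intervalIntegral.integral_Iic_sub_Iic integrable_phiAux.integrableOn
        integrable_phiAux.integrableOn]
    ring
  have h : HasDerivAt (fun y => stdNormalCDF 0 + ∫ t in (0:ℝ)..y, phiAux t) (phiAux x) x := by
    apply HasDerivAt.const_add
    exact intervalIntegral.integral_hasDerivAt_right
      (integrable_phiAux.intervalIntegrable)
      (integrable_phiAux.aestronglyMeasurable.stronglyMeasurableAtFilter)
      (Continuous.continuousAt (by unfold phiAux; continuity))
  have e : stdNormalCDF =ᶠ[nhds x] (fun y => stdNormalCDF 0 + ∫ t in (0:ℝ)..y, phiAux t) :=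
    Filter.Eventually.of_forall key
  exact HasDerivAt.congr_of_eventuallyEq h e

lemma tendsto_exp_neg_sq : Tendsto (fun t : ℝ => Real.exp (-t ^ 2 / 2)) atTop (nhds 0) := by
  apply Real.tendsto_exp_atBot.comp
  have h : Tendsto (fun t : ℝ => t ^ 2 / 2) atTop atTop :=
    (tendsto_pow_atTop (by norm_num)).atTop_div_const (by norm_num)
  simpa [neg_div] using tendsto_neg_atBot_iff.mpr h

lemma integrable_exp_half : Integrable (fun t : ℝ => Real.exp (-t ^ 2 / 2)) := by
  have h := integrable_exp_neg_mul_sq (by norm_num : (0:ℝ) < 1/2)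
  convert h using 2 with t; ring_nf

lemma integrable_mul_exp_half : Integrable (fun t : ℝ => t * Real.exp (-t ^ 2 / 2)) := by
  have h := integrable_mul_exp_neg_mul_sq (by norm_num : (0:ℝ) < 1/2)
  convert h using 2 with t; ring_nf

lemma E1 (x : ℝ) : ∫ t in Ioi x, t * Real.exp (-t ^ 2 / 2) = Real.exp (-x ^ 2 / 2) := by
  have h := integral_Ioi_of_hasDerivAt_of_tendsto'
    (f := fun t => -Real.exp (-t ^ 2 / 2)) (f' := fun t => t * Real.exp (-t ^ 2 / 2))
    (a := x) (m := 0)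
    (fun t _ => by
      have : HasDerivAt (fun t : ℝ => -t ^ 2 / 2) (-t) t := by
        have := ((hasDerivAt_pow 2 t).neg).div_const 2
        simpa using this.congr_deriv (by ring)
      exact ((this.exp).neg).congr_deriv (by ring))
    (integrable_mul_exp_half.integrableOn)
    (by simpa using tendsto_exp_neg_sq.neg)
  simpa using h

lemma tail_upper {x : ℝ} (hx : 0 < x) :
    ∫ t in Ioi x, Real.exp (-t ^ 2 / 2) ≤ Real.exp (-x ^ 2 / 2) / x := by
  have h1 : ∫ t in Ioi x, Real.exp (-t ^ 2 / 2) ≤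
      ∫ t in Ioi x, (t / x) * Real.exp (-t ^ 2 / 2) := by
    apply setIntegral_mono_on integrable_exp_half.integrableOn
      (((integrable_mul_exp_half).div_const x).integrableOn.congr_fun
        (fun t _ => by ring) measurableSet_Ioi)
      measurableSet_Ioi
    intro t ht
    have h2 : (1:ℝ) ≤ t / x := (one_le_div hx).2 (le_of_lt ht)
    nlinarith [Real.exp_pos (-t ^ 2 / 2)]
  have h2 : ∫ t in Ioi x, (t / x) * Real.exp (-t ^ 2 / 2)
      = (∫ t in Ioi x, t * Real.exp (-t ^ 2 / 2)) / x := by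
    rw [← integral_div]; congr 1; funext t; ring
  rw [h2, E1] at h1
  exact h1

/-- Auxiliary function for the lower Mills-type bound. -/
noncomputable def uaux (t : ℝ) : ℝ := t / (1 + t ^ 2) * Real.exp (-t ^ 2 / 2)

lemma hasDerivAt_uaux (t : ℝ) :
    HasDerivAt uaux (Real.exp (-t ^ 2 / 2) * (2 / (1 + t ^ 2) ^ 2 - 1)) t := by
  have h0 : (1 : ℝ) + t ^ 2 ≠ 0 := by positivity
  have hv : HasDerivAt (fun t : ℝ => t / (1 + t ^ 2))
      ((1 - t ^ 2) / (1 + t ^ 2) ^ 2) t := by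
    have := (hasDerivAt_id t).div ((hasDerivAt_pow 2 t).const_add 1) h0
    apply this.congr_deriv
    field_simp
    simp only [id]; ring
  have hw : HasDerivAt (fun t : ℝ => Real.exp (-t ^ 2 / 2))
      (-t * Real.exp (-t ^ 2 / 2)) t := by
    have h1 : HasDerivAt (fun t : ℝ => -t ^ 2 / 2) (-t) t := by
      have := ((hasDerivAt_pow 2 t).neg).div_const 2
      simpa using this.congr_deriv (by ring)
    simpa using (h1.exp).congr_deriv (by ring)
  have := hv.mul hw
  apply this.congr_deriv
  field_simp
  ring

lemma tendsto_uaux : Tendsto uaux atTop (nhds 0) := by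
  have hb : ∀ᶠ t : ℝ in atTop, |uaux t| ≤ Real.exp (-t ^ 2 / 2) := by
    filter_upwards [eventually_ge_atTop (0:ℝ)] with t ht
    unfold uaux
    rw [abs_mul, abs_of_nonneg (Real.exp_pos _).le]
    have h1 : |t / (1 + t ^ 2)| ≤ 1 := by
      rw [abs_div, abs_of_nonneg ht, abs_of_nonneg (by positivity : (0:ℝ) ≤ 1 + t ^ 2)]
      rw [div_le_one (by positivity)]
      nlinarith
    nlinarith [Real.exp_pos (-t ^ 2 / 2)]
  exact squeeze_zero_norm' (f := uaux) (by simpa [Real.norm_eq_abs] using hb) tendsto_exp_neg_sq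

lemma E2 (x : ℝ) :
    ∫ t in Ioi x, Real.exp (-t ^ 2 / 2) * (1 - 2 / (1 + t ^ 2) ^ 2) = uaux x := by
  have hint : IntegrableOn (fun t : ℝ => Real.exp (-t ^ 2 / 2) * (1 - 2 / (1 + t ^ 2) ^ 2))
      (Ioi x) := by
    apply (integrable_exp_half.mono' ?_ ?_).integrableOn
    · apply Continuous.aestronglyMeasurable
      apply Continuous.mul (by continuity)
      apply Continuous.sub continuous_const
      exact continuous_const.div (by continuity) (fun t => by positivity)
    · filter_upwards with t
      rw [Real.norm_eq_abs, abs_mul, abs_of_nonneg (Real.exp_pos _).le]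
      have h1 : |1 - 2 / (1 + t ^ 2) ^ 2| ≤ 1 := by
        rw [abs_le]
        constructor
        · have : 2 / (1 + t ^ 2) ^ 2 ≤ 2 := by
            rw [div_le_iff₀ (by positivity)]; nlinarith
          linarith
        · have : 0 ≤ 2 / (1 + t ^ 2) ^ 2 := by positivity
          linarith
      nlinarith [Real.exp_pos (-t ^ 2 / 2)]
  have h := integral_Ioi_of_hasDerivAt_of_tendsto'
    (f := fun t => -uaux t)
    (f' := fun t => Real.exp (-t ^ 2 / 2) * (1 - 2 / (1 + t ^ 2) ^ 2))
    (a := x) (m := 0)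
    (fun t _ => by exact (hasDerivAt_uaux t).neg.congr_deriv (by ring))
    hint
    (by simpa using tendsto_uaux.neg)
  simpa using h

lemma tail_lower (x : ℝ) :
    uaux x ≤ ∫ t in Ioi x, Real.exp (-t ^ 2 / 2) := by
  rw [← E2 x]
  apply setIntegral_mono_on ?_ integrable_exp_half.integrableOn measurableSet_Ioi
  · intro t _
    have : 0 ≤ 2 / (1 + t ^ 2) ^ 2 := by positivity
    nlinarith [Real.exp_pos (-t ^ 2 / 2)]
  · apply (integrable_exp_half.mono' ?_ ?_).integrableOn
    · apply Continuous.aestronglyMeasurable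
      apply Continuous.mul (by continuity)
      apply Continuous.sub continuous_const
      exact continuous_const.div (by continuity) (fun t => by positivity)
    · filter_upwards with t
      rw [Real.norm_eq_abs, abs_mul, abs_of_nonneg (Real.exp_pos _).le]
      have h1 : |1 - 2 / (1 + t ^ 2) ^ 2| ≤ 1 := by
        rw [abs_le]
        constructor
        · have : 2 / (1 + t ^ 2) ^ 2 ≤ 2 := by
            rw [div_le_iff₀ (by positivity)]; nlinarith
          linarith
        · have : 0 ≤ 2 / (1 + t ^ 2) ^ 2 := by positivity
          linarith
      nlinarith [Real.exp_pos (-t ^ 2 / 2)]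

lemma tail_eq_exp (x : ℝ) :
    1 - stdNormalCDF x = (∫ t in Ioi x, Real.exp (-t ^ 2 / 2)) / Real.sqrt (2 * π) := by
  rw [tail_eq, ← integral_div]
  rfl

lemma tail_le_phi_div {x : ℝ} (hx : 0 < x) : 1 - stdNormalCDF x ≤ phiAux x / x := by
  rw [tail_eq_exp]
  have hs : (0:ℝ) < Real.sqrt (2 * π) := Real.sqrt_pos.2 (by positivity)
  unfold phiAux
  rw [div_right_comm]
  exact div_le_div_of_nonneg_right (tail_upper hx) hs.le

lemma phi_div_tail_ge {x : ℝ} (hx : 0 < x) : x ≤ phiAux x / (1 - stdNormalCDF x) := by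
  have ht : 0 < 1 - stdNormalCDF x := by linarith [stdNormalCDF_lt_one x]
  rw [le_div_iff₀ ht]
  have h := tail_le_phi_div hx
  rw [div_eq_mul_inv] at h
  calc x * (1 - stdNormalCDF x) ≤ x * (phiAux x * x⁻¹) :=
        mul_le_mul_of_nonneg_left h hx.le
    _ = phiAux x := by field_simp
    _ ≤ phiAux x := le_rfl

lemma tail_ge_phi {x : ℝ} (hx : 0 < x) :
    phiAux x * (x / (1 + x ^ 2)) ≤ 1 - stdNormalCDF x := by
  rw [tail_eq_exp]
  have hs : (0:ℝ) < Real.sqrt (2 * π) := Real.sqrt_pos.2 (by positivity)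
  have he : phiAux x * (x / (1 + x ^ 2)) = uaux x / Real.sqrt (2 * π) := by
    unfold phiAux uaux; ring
  rw [he]
  exact div_le_div_of_nonneg_right (tail_lower x) hs.le

lemma phi_div_tail_le {x : ℝ} (hx : 0 < x) :
    phiAux x / (1 - stdNormalCDF x) ≤ x + 1 / x := by
  have ht : 0 < 1 - stdNormalCDF x := by linarith [stdNormalCDF_lt_one x]
  have hlow := tail_ge_phi hx
  have hpos : 0 < phiAux x * (x / (1 + x ^ 2)) := by
    have := phiAux_pos x; positivity
  have h1 : phiAux x / (1 - stdNormalCDF x) ≤ phiAux x / (phiAux x * (x / (1 + x ^ 2))) :=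
    div_le_div_of_nonneg_left (phiAux_pos x).le hpos hlow
  calc phiAux x / (1 - stdNormalCDF x) ≤ phiAux x / (phiAux x * (x / (1 + x ^ 2))) := h1
    _ = (1 + x ^ 2) / x := by
        have hp : phiAux x ≠ 0 := (phiAux_pos x).ne'
        field_simp
    _ = x + 1 / x := by field_simp; ring

lemma hasDerivAt_logit {y : ℝ} (h0 : 0 < y) (h1 : y < 1) :
    HasDerivAt logit (1 / y + 1 / (1 - y)) y := by
  have hy1 : (1 : ℝ) - y ≠ 0 := by linarith
  have ha : HasDerivAt Real.log (1 / y) y := by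
    simpa [one_div] using Real.hasDerivAt_log h0.ne'
  have hb : HasDerivAt (fun y : ℝ => Real.log (1 - y)) (-1 / (1 - y)) y := by
    have h2 : HasDerivAt (fun y : ℝ => 1 - y) (-1) y := by
      simpa using (hasDerivAt_id y).const_sub 1
    simpa using h2.log hy1
  have := ha.sub hb
  apply this.congr_deriv
  field_simp
  ring

lemma tendsto_sqrt_atTop' : Tendsto Real.sqrt atTop atTop := by
  apply tendsto_atTop_atTop.2
  intro b
  refine ⟨max 0 b ^ 2, fun n hn => ?_⟩
  have h1 : b ≤ Real.sqrt (max 0 b ^ 2) := by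
    rw [Real.sqrt_sq (le_max_left 0 b)]; exact le_max_right 0 b
  exact h1.trans (Real.sqrt_le_sqrt hn)

lemma tendsto_phiAux : Tendsto phiAux atTop (nhds 0) := by
  have h := tendsto_exp_neg_sq.div_const (Real.sqrt (2 * π))
  rw [zero_div] at h
  exact h

lemma tendsto_tail_zero : Tendsto (fun x => 1 - stdNormalCDF x) atTop (nhds 0) := by
  apply tendsto_of_tendsto_of_tendsto_of_le_of_le' tendsto_const_nhds
    (tendsto_phiAux.div_atTop tendsto_id)
  · filter_upwards with x
    linarith [stdNormalCDF_lt_one x]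
  · filter_upwards [eventually_gt_atTop (0:ℝ)] with x hx
    exact tail_le_phi_div hx

lemma tendsto_stdNormalCDF_one : Tendsto stdNormalCDF atTop (nhds 1) := by
  have h := tendsto_const_nhds (α := ℝ) (x := (1:ℝ)) (f := atTop) |>.sub tendsto_tail_zero
  simpa using h

end Aux

/-- For constants c > 0 and d, the derivative of n ↦ logit(Φ(c√n + d)) tends to
c²/2 as n → ∞. -/
theorem limit_deriv_logit_stdNormalCDF_pos (c d : ℝ) (hc : 0 < c) :
    Tendsto (deriv fun n : ℝ => logit (stdNormalCDF (c * Real.sqrt n + d)))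
      atTop (nhds (c ^ 2 / 2)) := by
  set x : ℝ → ℝ := fun n => c * Real.sqrt n + d with hxdef
  set s : ℝ → ℝ := fun n => c * (1 / (2 * Real.sqrt n)) with hsdef
  set D : ℝ → ℝ := fun n =>
    (1 / stdNormalCDF (x n) + 1 / (1 - stdNormalCDF (x n))) * (phiAux (x n) * s n) with hDdef
  -- Step 1: the derivative equals D eventually
  have hD : ∀ n : ℝ, 0 < n →
      HasDerivAt (fun n : ℝ => logit (stdNormalCDF (c * Real.sqrt n + d))) (D n) n := by
    intro n hn
    have h3 : HasDerivAt x (s n) n := by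
      have := ((Real.hasDerivAt_sqrt hn.ne').const_mul c).add_const d
      exact this
    have h2 := hasDerivAt_stdNormalCDF (x n)
    have h1 := hasDerivAt_logit (stdNormalCDF_pos (x n)) (stdNormalCDF_lt_one (x n))
    have hcomp := h1.comp n (h2.comp n h3)
    have he : (logit ∘ stdNormalCDF ∘ x) = fun n : ℝ =>
        logit (stdNormalCDF (c * Real.sqrt n + d)) := rfl
    rw [he] at hcomp
    exact hcomp
  have heq : (deriv fun n : ℝ => logit (stdNormalCDF (c * Real.sqrt n + d))) =ᶠ[atTop] D := by
    filter_upwards [eventually_gt_atTop (0:ℝ)] with n hn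
    exact (hD n hn).deriv
  rw [tendsto_congr' heq]
  -- Step 2: basic limits
  have h_x : Tendsto x atTop atTop := by
    apply tendsto_atTop_add_const_right
    exact tendsto_sqrt_atTop'.const_mul_atTop hc
  have h_inv : Tendsto (fun n : ℝ => 1 / (2 * Real.sqrt n)) atTop (nhds 0) :=
    tendsto_const_nhds.div_atTop (tendsto_sqrt_atTop'.const_mul_atTop two_pos)
  have h_s : Tendsto s atTop (nhds 0) := by
    have h2 : Tendsto (fun n : ℝ => c * (1 / (2 * Real.sqrt n))) atTop (nhds (c * 0)) :=
      h_inv.const_mul c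
    rw [mul_zero] at h2
    exact h2
  -- Step 3: split D into A + B
  set A : ℝ → ℝ := fun n => phiAux (x n) / stdNormalCDF (x n) * s n with hAdef
  set B : ℝ → ℝ := fun n => phiAux (x n) / (1 - stdNormalCDF (x n)) * s n with hBdef
  have hDAB : D = fun n => A n + B n := by
    funext n
    simp only [hDdef, hAdef, hBdef]
    ring
  rw [hDAB]
  have hA : Tendsto A atTop (nhds 0) := by
    have h1 : Tendsto (fun n => phiAux (x n) / stdNormalCDF (x n)) atTop (nhds (0 / 1)) :=
      (tendsto_phiAux.comp h_x).div (tendsto_stdNormalCDF_one.comp h_x) one_ne_zero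
    have := h1.mul h_s
    simpa using this
  have hB : Tendsto B atTop (nhds (c ^ 2 / 2)) := by
    set L : ℝ → ℝ := fun n => x n * s n with hLdef
    set U : ℝ → ℝ := fun n => L n + 1 / x n * s n with hUdef
    have hL : Tendsto L atTop (nhds (c ^ 2 / 2)) := by
      have hg : Tendsto (fun n : ℝ => c ^ 2 / 2 + d * c * (1 / (2 * Real.sqrt n)))
          atTop (nhds (c ^ 2 / 2 + d * c * 0)) :=
        tendsto_const_nhds.add ((h_inv.const_mul (d * c)))
      have he : (fun n : ℝ => c ^ 2 / 2 + d * c * (1 / (2 * Real.sqrt n))) =ᶠ[atTop] L := by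
        filter_upwards [eventually_gt_atTop (0:ℝ)] with n hn
        have hsn : Real.sqrt n ≠ 0 := (Real.sqrt_pos.2 hn).ne'
        simp only [hLdef, hxdef, hsdef]
        field_simp
      have := hg.congr' he
      simpa using this
    have hU : Tendsto U atTop (nhds (c ^ 2 / 2)) := by
      have h0 : Tendsto (fun n => 1 / x n * s n) atTop (nhds 0) := by
        have h1 : Tendsto (fun n => 1 / x n) atTop (nhds 0) := by
          exact Tendsto.congr (fun n => (one_div (x n)).symm) h_x.inv_tendsto_atTop
        simpa using h1.mul h_s
      have h2 := hL.add h0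
      rw [add_zero] at h2
      exact h2
    apply tendsto_of_tendsto_of_tendsto_of_le_of_le' hL hU
    · filter_upwards [h_x.eventually_gt_atTop 0, eventually_ge_atTop (0:ℝ)] with n hxn hn
      have hs0 : 0 ≤ s n := by
        have : (0:ℝ) ≤ 1 / (2 * Real.sqrt n) := by positivity
        exact mul_nonneg hc.le this
      exact mul_le_mul_of_nonneg_right (phi_div_tail_ge hxn) hs0
    · filter_upwards [h_x.eventually_gt_atTop 0, eventually_ge_atTop (0:ℝ)] with n hxn hn
      have hs0 : 0 ≤ s n := by
        have : (0:ℝ) ≤ 1 / (2 * Real.sqrt n) := by positivity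
        exact mul_nonneg hc.le this
      have := mul_le_mul_of_nonneg_right (phi_div_tail_le hxn) hs0
      calc B n ≤ (x n + 1 / x n) * s n := this
        _ = U n := by simp only [hUdef, hLdef]; ring
  have := hA.add hB
  simpa using this
end

section
/- For any real constants c < 0 and d, the function f(n) = logit(Φ(c√n + d)) satisfies lim_{n→∞} f′(n) = −c²/2. -/
open Real Set Filter MeasureTheory intervalIntegral Topology

set_option maxHeartbeats 1000000

namespace StdNormalAux

/-- The standard normal density. -/
noncomputable def P (x : ℝ) : ℝ := Real.exp (-x ^ 2 / 2) / Real.sqrt (2 * Real.pi)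

lemma sqrt2pi_pos : 0 < Real.sqrt (2 * Real.pi) :=
  Real.sqrt_pos.2 (by positivity)

lemma P_pos (x : ℝ) : 0 < P x := div_pos (Real.exp_pos _) sqrt2pi_pos

lemma P_cont : Continuous P :=
  (Real.continuous_exp.comp (by continuity)).div_const _

lemma P_eq : P = fun t => Real.exp (-(1/2) * t ^ 2) * (Real.sqrt (2 * Real.pi))⁻¹ := by
  funext t
  rw [P, div_eq_mul_inv]
  ring_nf

lemma P_integrable : Integrable P := by
  rw [P_eq]
  exact (integrable_exp_neg_mul_sq (by norm_num)).mul_const _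

lemma P_iOn (s : Set ℝ) : IntegrableOn P s := P_integrable.integrableOn

lemma P_ii (a b : ℝ) : IntervalIntegrable P volume a b :=
  P_integrable.intervalIntegrable

lemma P_hasDeriv (x : ℝ) : HasDerivAt P (-x * P x) x := by
  have h1 : HasDerivAt (fun x : ℝ => -x ^ 2 / 2) (-x) x := by
    have := ((hasDerivAt_pow 2 x).neg).div_const 2
    refine this.congr_deriv ?_
    simp
    ring
  have h2 := (Real.hasDerivAt_exp (-x ^ 2 / 2)).comp x h1
  have h3 := h2.div_const (Real.sqrt (2 * Real.pi))
  refine h3.congr_deriv ?_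
  simp only [P]
  ring

lemma CDF_eq (y : ℝ) : stdNormalCDF y = ∫ t in Iic y, P t := rfl

lemma CDF_hasDeriv (x : ℝ) : HasDerivAt stdNormalCDF (P x) x := by
  have key : stdNormalCDF = fun y => stdNormalCDF 0 + ∫ t in (0:ℝ)..y, P t := by
    funext y
    have h1 := intervalIntegral.integral_Iic_sub_Iic (P_iOn (Iic 0)) (P_iOn (Iic y))
    rw [CDF_eq, CDF_eq]
    linarith
  rw [key]
  have hmeas : StronglyMeasurableAtFilter P (𝓝 x) :=
    P_cont.aestronglyMeasurable.stronglyMeasurableAtFilter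
  have := integral_hasDerivAt_right (a := 0) (b := x) (P_ii 0 x) hmeas
    P_cont.continuousAt
  exact this.const_add _

lemma CDF_pos (x : ℝ) : 0 < stdNormalCDF x := by
  have h2 : (∫ t in Ioc (x - 1) x, P t) ≤ ∫ t in Iic x, P t :=
    setIntegral_mono_set (P_iOn (Iic x))
      (Eventually.of_forall fun t => (P_pos t).le)
      (HasSubset.Subset.eventuallyLE Ioc_subset_Iic_self)
  have h3 : 0 < ∫ t in Ioc (x - 1) x, P t := by
    rw [← intervalIntegral.integral_of_le (by linarith : x - 1 ≤ x)]
    exact intervalIntegral_pos_of_pos (P_ii _ _) P_pos (by linarith)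
  rw [CDF_eq]
  linarith

lemma integral_P : ∫ t, P t = 1 := by
  rw [P_eq, MeasureTheory.integral_mul_const, integral_gaussian]
  rw [show Real.pi / (1/2) = 2 * Real.pi by ring]
  exact mul_inv_cancel₀ sqrt2pi_pos.ne'

lemma CDF_lt_one (x : ℝ) : stdNormalCDF x < 1 := by
  have split := integral_Iic_add_Ioi (b := x) (P_iOn (Iic x)) (P_iOn (Ioi x))
  have hIoi : 0 < ∫ t in Ioi x, P t := by
    have h2 : (∫ t in Ioc x (x + 1), P t) ≤ ∫ t in Ioi x, P t :=
      setIntegral_mono_set (P_iOn (Ioi x))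
        (Eventually.of_forall fun t => (P_pos t).le)
        (HasSubset.Subset.eventuallyLE Ioc_subset_Ioi_self)
    have h3 : 0 < ∫ t in Ioc x (x + 1), P t := by
      rw [← intervalIntegral.integral_of_le (by linarith : x ≤ x + 1)]
      exact intervalIntegral_pos_of_pos (P_ii _ _) P_pos (by linarith)
    linarith
  rw [integral_P] at split
  rw [CDF_eq]
  linarith

lemma CDF_tendsto_zero : Tendsto stdNormalCDF atBot (𝓝 0) := by
  have h : Tendsto (fun x : ℝ => ∫ t in Iic (-x), P t) atTop
      (𝓝 (∫ t in ⋂ x : ℝ, Iic (-x), P t)) :=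
    tendsto_setIntegral_of_antitone (fun _ => measurableSet_Iic)
      (fun i j hij => Iic_subset_Iic.2 (by linarith)) ⟨0, P_iOn _⟩
  have hempty : ⋂ x : ℝ, Iic (-x) = (∅ : Set ℝ) := by
    ext y
    simp only [mem_iInter, mem_Iic, mem_empty_iff_false, iff_false, not_forall, not_le]
    exact ⟨-y + 1, by linarith⟩
  rw [hempty] at h
  simp only [Measure.restrict_empty, integral_zero_measure] at h
  have h2 := h.comp tendsto_neg_atBot_atTop
  refine h2.congr fun x => ?_
  simp only [Function.comp, neg_neg]
  exact (CDF_eq x).symm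

lemma P_tendsto_zero : Tendsto P atBot (𝓝 0) := by
  have h1 : Tendsto (fun x : ℝ => x * x) atBot atTop :=
    tendsto_id.atBot_mul_atBot₀ tendsto_id
  have h2 : Tendsto (fun x : ℝ => -(x * x) / 2) atBot atBot := by
    apply (tendsto_div_const_atBot_of_pos (by norm_num)).2
    exact tendsto_neg_atTop_atBot.comp h1
  have h3 : Tendsto (fun x : ℝ => Real.exp (-x ^ 2 / 2)) atBot (𝓝 0) := by
    have := Real.tendsto_exp_atBot.comp h2
    refine this.congr fun x => ?_
    simp only [Function.comp]
    ring_nf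
  have h4 := h3.div_const (Real.sqrt (2 * Real.pi))
  rw [zero_div] at h4
  exact h4

lemma div_ratio_aux (c x s F Pv : ℝ) (hx : x ≠ 0) (hs : s ≠ 0) (hF : F ≠ 0) (_hP : Pv ≠ 0) :
    c * x / s / (F / (Pv / x)) = F⁻¹ * (Pv * (c / s)) := by
  field_simp

lemma mills : Tendsto (fun x => stdNormalCDF x / (P x / (-x))) atBot (𝓝 1) := by
  apply HasDerivAt.lhopital_zero_atBot (f' := fun x => P x)
    (g' := fun x => P x + P x / x ^ 2)
  · exact Eventually.of_forall CDF_hasDeriv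
  · filter_upwards [eventually_lt_atBot (0 : ℝ)] with x hx
    have hx0 : x ≠ 0 := hx.ne
    have hne : -x ≠ 0 := by simp [hx0]
    have h1 : HasDerivAt (fun x : ℝ => -x) (-1) x := (hasDerivAt_id x).neg
    have := (P_hasDeriv x).div h1 hne
    refine this.congr_deriv ?_
    field_simp
    ring
  · filter_upwards [eventually_lt_atBot (0 : ℝ)] with x hx
    have := P_pos x
    positivity
  · exact CDF_tendsto_zero
  · have h1 : Tendsto (fun x : ℝ => (-x)⁻¹) atBot (𝓝 0) :=
      Tendsto.inv_tendsto_atTop tendsto_neg_atBot_atTop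
    have := P_tendsto_zero.mul h1
    simpa [div_eq_mul_inv] using this
  · have hsq : Tendsto (fun x : ℝ => x ^ 2) atBot atTop := by
      have := tendsto_id.atBot_mul_atBot₀ (l := atBot) (f := fun x : ℝ => x) tendsto_id
      refine this.congr fun x => ?_
      simp only [id_eq]
      ring
    have h2 : Tendsto (fun x : ℝ => 1 / x ^ 2) atBot (𝓝 0) := by
      simpa [one_div] using (hsq.inv_tendsto_atTop.congr fun x => rfl :
        Tendsto (fun x : ℝ => (x ^ 2)⁻¹) atBot (𝓝 0))
    have hlim : Tendsto (fun x : ℝ => 1 + 1 / x ^ 2) atBot (𝓝 (1 + 0)) :=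
      tendsto_const_nhds.add h2
    have h1 : Tendsto (fun x : ℝ => (1 + 1 / x ^ 2)⁻¹) atBot (𝓝 1) := by
      have := hlim.inv₀ (by norm_num)
      simpa using this
    refine h1.congr' ?_
    filter_upwards [eventually_lt_atBot (0 : ℝ)] with x hx
    have hx0 : x ≠ 0 := hx.ne
    have hd : P x + P x / x ^ 2 ≠ 0 := by
      have := P_pos x
      positivity
    have he : 1 + 1 / x ^ 2 ≠ 0 := by positivity
    rw [inv_eq_one_div, div_eq_div_iff he hd]
    field_simp

end StdNormalAux

open StdNormalAux

/-- For constants c > 0 and d, the derivative of n ↦ logit(Φ(c√n + d)) tends to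
−c²/2 as n → ∞ (case c < 0). -/
theorem limit_deriv_logit_stdNormalCDF_neg (c d : ℝ) (hc : c < 0) :
    Tendsto (deriv fun n : ℝ => logit (stdNormalCDF (c * Real.sqrt n + d)))
      atTop (nhds (-(c ^ 2) / 2)) := by
  set u : ℝ → ℝ := fun n => c * Real.sqrt n + d with hu_def
  -- √ tends to atTop
  have hsqrt : Tendsto Real.sqrt atTop atTop := by
    refine tendsto_atTop_atTop.2 fun b => ⟨max (b ^ 2) 0, fun a ha => ?_⟩
    have h1 : b ^ 2 ≤ a := le_trans (le_max_left _ _) ha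
    calc b ≤ |b| := le_abs_self b
    _ = Real.sqrt (b ^ 2) := (Real.sqrt_sq_eq_abs b).symm
    _ ≤ Real.sqrt a := Real.sqrt_le_sqrt h1
  -- u tends to atBot
  have hu : Tendsto u atTop atBot := by
    apply tendsto_atBot_add_const_right
    exact (tendsto_const_mul_atBot_of_neg hc).2 hsqrt
  have hΦu : Tendsto (fun n => stdNormalCDF (u n)) atTop (𝓝 0) :=
    CDF_tendsto_zero.comp hu
  have hPu : Tendsto (fun n => P (u n)) atTop (𝓝 0) := P_tendsto_zero.comp hu
  have hM : Tendsto (fun n => stdNormalCDF (u n) / (P (u n) / (-(u n)))) atTop (𝓝 1) :=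
    mills.comp hu
  have h2s : Tendsto (fun n : ℝ => 2 * Real.sqrt n) atTop atTop :=
    hsqrt.const_mul_atTop (by norm_num)
  have hsq' : Tendsto (fun n : ℝ => c / (2 * Real.sqrt n)) atTop (𝓝 0) := by
    have := h2s.inv_tendsto_atTop.const_mul c
    simpa [div_eq_mul_inv] using this
  -- Term 2
  have hinv : Tendsto (fun n => (1 - stdNormalCDF (u n))⁻¹) atTop (𝓝 1) := by
    have := (tendsto_const_nhds.sub hΦu).inv₀ (by norm_num : (1:ℝ) - 0 ≠ 0)
    simpa using this
  have hT2 : Tendsto (fun n => (1 - stdNormalCDF (u n))⁻¹ *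
      (P (u n) * (c / (2 * Real.sqrt n)))) atTop (𝓝 0) := by
    have := hinv.mul (hPu.mul hsq')
    simpa using this
  -- Term 1
  have ha : Tendsto (fun n => c * (-(u n)) / (2 * Real.sqrt n)) atTop (𝓝 (-(c ^ 2) / 2)) := by
    have h2 : Tendsto (fun n : ℝ => (-(c * d)) / (2 * Real.sqrt n)) atTop (𝓝 0) := by
      have := h2s.inv_tendsto_atTop.const_mul (-(c * d))
      simpa [div_eq_mul_inv] using this
    have h1 : Tendsto (fun n : ℝ => -(c ^ 2) / 2 + (-(c * d)) / (2 * Real.sqrt n))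
        atTop (𝓝 (-(c ^ 2) / 2 + 0)) := tendsto_const_nhds.add h2
    rw [add_zero] at h1
    refine h1.congr' ?_
    filter_upwards [eventually_ge_atTop (1 : ℝ)] with n hn
    have hs : (0 : ℝ) < Real.sqrt n := Real.sqrt_pos.2 (by linarith)
    simp only [hu_def]
    field_simp
    ring
  have hT1 : Tendsto (fun n => (stdNormalCDF (u n))⁻¹ *
      (P (u n) * (c / (2 * Real.sqrt n)))) atTop (𝓝 (-(c ^ 2) / 2)) := by
    have hdiv : Tendsto (fun n => (c * (-(u n)) / (2 * Real.sqrt n)) /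
        (stdNormalCDF (u n) / (P (u n) / (-(u n))))) atTop (𝓝 (-(c ^ 2) / 2 / 1)) :=
      ha.div hM one_ne_zero
    rw [div_one] at hdiv
    refine hdiv.congr' ?_
    have hun : ∀ᶠ n in atTop, u n < 0 := hu.eventually (eventually_lt_atBot 0)
    filter_upwards [eventually_ge_atTop (1 : ℝ), hun] with n hn hun
    have hs : (0 : ℝ) < Real.sqrt n := Real.sqrt_pos.2 (by linarith)
    have hΦ := CDF_pos (u n)
    have hP := P_pos (u n)
    have hune : -(u n) ≠ 0 := by
      simp only [neg_ne_zero]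
      exact hun.ne
    exact div_ratio_aux c (-(u n)) (2 * Real.sqrt n) (stdNormalCDF (u n)) (P (u n))
      hune (by positivity) hΦ.ne' hP.ne'
  -- combined derivative limit
  have hD : Tendsto (fun n => ((stdNormalCDF (u n))⁻¹ + (1 - stdNormalCDF (u n))⁻¹) *
      (P (u n) * (c * (1 / (2 * Real.sqrt n))))) atTop (𝓝 (-(c ^ 2) / 2)) := by
    have h := hT1.add hT2
    rw [add_zero] at h
    refine h.congr fun n => ?_
    ring
  -- deriv equals D eventually
  refine hD.congr' ?_
  filter_upwards [eventually_ge_atTop (1 : ℝ)] with n hn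
  have hn0 : n ≠ 0 := by linarith
  have h1 : HasDerivAt (fun m : ℝ => c * Real.sqrt m + d) (c * (1 / (2 * Real.sqrt n))) n :=
    ((Real.hasDerivAt_sqrt hn0).const_mul c).add_const d
  have h2 : HasDerivAt stdNormalCDF (P (u n)) (u n) := CDF_hasDeriv _
  have hy0 : 0 < stdNormalCDF (u n) := CDF_pos _
  have hy1 : stdNormalCDF (u n) < 1 := CDF_lt_one _
  have l1 : HasDerivAt Real.log (stdNormalCDF (u n))⁻¹ (stdNormalCDF (u n)) :=
    Real.hasDerivAt_log hy0.ne'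
  have l2 : HasDerivAt (fun x : ℝ => Real.log (1 - x)) (-(1 - stdNormalCDF (u n))⁻¹)
      (stdNormalCDF (u n)) := by
    have i : HasDerivAt (fun x : ℝ => 1 - x) (-1) (stdNormalCDF (u n)) :=
      (hasDerivAt_id _).const_sub 1
    have := (Real.hasDerivAt_log (by linarith : (1:ℝ) - stdNormalCDF (u n) ≠ 0)).comp
      (stdNormalCDF (u n)) i
    refine this.congr_deriv ?_
    ring
  have h3 : HasDerivAt logit ((stdNormalCDF (u n))⁻¹ + (1 - stdNormalCDF (u n))⁻¹)
      (stdNormalCDF (u n)) := by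
    have h3' : HasDerivAt (fun x : ℝ => Real.log x - Real.log (1 - x))
        ((stdNormalCDF (u n))⁻¹ + (1 - stdNormalCDF (u n))⁻¹) (stdNormalCDF (u n)) := by
      refine (l1.sub l2).congr_deriv ?_
      ring
    exact h3'
  have hc2 : HasDerivAt (fun m : ℝ => stdNormalCDF (c * Real.sqrt m + d))
      (P (u n) * (c * (1 / (2 * Real.sqrt n)))) n := h2.comp n h1
  have hcomp : HasDerivAt (fun m : ℝ => logit (stdNormalCDF (c * Real.sqrt m + d)))
      (((stdNormalCDF (u n))⁻¹ + (1 - stdNormalCDF (u n))⁻¹) *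
        (P (u n) * (c * (1 / (2 * Real.sqrt n))))) n := HasDerivAt.comp (h₂ := logit) n h3 hc2
  exact hcomp.deriv.symm
end
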